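/- arXiv:2312.11546 — 2 statements merged into one kernel-verified Lean document; each statement's English description precedes it below -/
import Mathlib

section
/- In COT, every ordinal is the index of some class: for every ordinal x there is a class X with ι(X) = x. -/
/-- A two-sorted signature for Class Ordering Theory: `O` is the sort of
ordinals, `C` the sort of (flat, possibly non-extensional) classes of
ordinals, with membership `mem`, the prior relation `prec`, and the (partial)
indexing function `iota` given as a functional relation. -/
structure COT (O : Type*) (C : Type*) where
  mem : O → C → Prop
  prec : C → C → Prop
  iota : C → O → Prop

namespace COT

variable {O C : Type*} (S : COT O C)

/-- Coextensionality of classes. -/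
def equiv (X Y : C) : Prop := ∀ z, S.mem z X ↔ S.mem z Y

/-- `X` is a singleton class of `x`. -/
def isSing (x : O) (X : C) : Prop := ∀ z, S.mem z X ↔ z = x

/-- `x < y` iff `{x} ≺ {y}` (for all classes realizing the singletons). -/
def lt (x y : O) : Prop := ∀ X Y, S.isSing x X → S.isSing y Y → S.prec X Y

/-- `x ≤ y`. -/
def le (x y : O) : Prop := S.lt x y ∨ x = y

/-- `l` is the least ordinal strictly above all elements of `X` (the limit of `X`). -/
def isLim (X : C) (l : O) : Prop :=
  (∀ x, S.mem x X → S.lt x l) ∧ ∀ l', (∀ x, S.mem x X → S.lt x l') → S.le l l'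

/-- `X` is bounded: it has a limit. -/
def bnd (X : C) : Prop := ∃ l, S.isLim X l

/-- `Y` is a subclass of `X`. -/
def subclass (Y X : C) : Prop := ∀ z, S.mem z Y → S.mem z X

/-- Equinumerosity: there is a class bijection between `X` and `Y`. -/
def equinum (X Y : C) : Prop :=
  ∃ R : O → O → Prop, (∀ a b, R a b → S.mem a X ∧ S.mem b Y) ∧
    (∀ a, S.mem a X → ∃! b, R a b) ∧ (∀ b, S.mem b Y → ∃! a, R a b)

/-- `i = lim {ι(Y) : Y ≺ X}`: `i` is the least ordinal strictly above all
indices of classes prior to `X`. -/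
def indexSpec (X : C) (i : O) : Prop :=
  (∀ Y j, S.prec Y X → S.iota Y j → S.lt j i) ∧
    ∀ i', (∀ Y j, S.prec Y X → S.iota Y j → S.lt j i') → S.le i i'

/-- The interpreted set membership: `y ∈* x` iff `y ε ι⁻¹(x)`. -/
def memStar (y x : O) : Prop := ∃ X, S.mem y X ∧ S.iota X x

/-- The axioms of COT. -/
structure Axioms : Prop where
  /-- Comprehension. -/
  comp : ∀ P : O → Prop, ∃ X, ∀ x, S.mem x X ↔ P x
  /-- `≺` is transitive. -/
  prec_trans : ∀ X Y Z, S.prec X Y → S.prec Y Z → S.prec X Z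
  /-- `≺` is co-connected. -/
  coConnected : ∀ X Y, ¬ S.equiv X Y ↔ (S.prec X Y ∨ S.prec Y X)
  /-- `≺` is well-founded (schema). -/
  wf : ∀ P : C → Prop, (∃ X, P X) → ∃ M, P M ∧ ∀ Y, P Y → ¬ S.prec Y M
  /-- Respective: `lim X ≤ y ε Y → X ≺ Y`. -/
  respective : ∀ X Y l y, S.isLim X l → S.le l y → S.mem y Y → S.prec X Y
  /-- `ι` is a partial function. -/
  iota_fun : ∀ X i j, S.iota X i → S.iota X j → i = j
  /-- Indexing: every bounded class has an index. -/
  indexing : ∀ X, S.bnd X → ∃ i, S.iota X i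
  /-- The index satisfies `ι(X) = lim {ι(Y) : Y ≺ X}`. -/
  iota_spec : ∀ X i, S.iota X i → S.indexSpec X i
  /-- Infinity: there is a nonzero ordinal closed under successor from below. -/
  infinity : ∃ l : O, (∃ k, S.lt k l) ∧ ∀ x, S.lt x l → ∃ y, S.lt x y ∧ S.lt y l
  /-- Boundedness: a class equinumerous with a bounded class is bounded. -/
  boundedness : ∀ X Y, S.bnd X → S.equinum X Y → S.bnd Y

end COT

namespace COT

section Aux

variable {O C : Type*} {S : COT O C} (hS : S.Axioms)
include hS

lemma aux_not_prec_of_equiv {X Y : C} (h : S.equiv X Y) : ¬ S.prec X Y := by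
  intro hp
  exact ((hS.coConnected X Y).mpr (Or.inl hp)) h

omit hS in lemma aux_equiv_symm {X Y : C} (h : S.equiv X Y) : S.equiv Y X :=
  fun z => (h z).symm

lemma aux_prec_congr_left {X X' Y : C} (he : S.equiv X X') (hp : S.prec X Y) :
    S.prec X' Y := by
  have hne : ¬ S.equiv X' Y := by
    intro h'
    exact aux_not_prec_of_equiv hS (fun z => (he z).trans (h' z)) hp
  rcases (hS.coConnected X' Y).mp hne with h | h
  · exact h
  · exact absurd (hS.prec_trans X Y X' hp h) (aux_not_prec_of_equiv hS he)

lemma aux_prec_congr_right {X Y Y' : C} (he : S.equiv Y Y') (hp : S.prec X Y) :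
    S.prec X Y' := by
  have hne : ¬ S.equiv X Y' := by
    intro h'
    exact aux_not_prec_of_equiv hS (fun z => (h' z).trans ((he z).symm)) hp
  rcases (hS.coConnected X Y').mp hne with h | h
  · exact h
  · exact absurd (hS.prec_trans Y' X Y h hp)
      (aux_not_prec_of_equiv hS (aux_equiv_symm (S := S) he))

lemma aux_sing_exists (x : O) : ∃ X : C, S.isSing x X := hS.comp (· = x)

lemma aux_lt_of_sing_prec {x y : O} {X Y : C} (hX : S.isSing x X)
    (hY : S.isSing y Y) (hp : S.prec X Y) : S.lt x y := by
  intro X' Y' hX' hY'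
  have heX : S.equiv X X' := fun z => (hX z).trans ((hX' z).symm)
  have heY : S.equiv Y Y' := fun z => (hY z).trans ((hY' z).symm)
  exact aux_prec_congr_right hS heY (aux_prec_congr_left hS heX hp)

lemma aux_lt_irrefl (x : O) : ¬ S.lt x x := by
  intro h
  obtain ⟨X, hX⟩ := aux_sing_exists (S := S) hS x
  exact aux_not_prec_of_equiv hS (fun z => Iff.rfl) (h X X hX hX)

lemma aux_lt_total {x y : O} (h : x ≠ y) : S.lt x y ∨ S.lt y x := by
  obtain ⟨X, hX⟩ := aux_sing_exists (S := S) hS x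
  obtain ⟨Y, hY⟩ := aux_sing_exists (S := S) hS y
  have hne : ¬ S.equiv X Y := by
    intro he
    exact h ((hY x).mp ((he x).mp ((hX x).mpr rfl)))
  rcases (hS.coConnected X Y).mp hne with hp | hp
  · exact Or.inl (aux_lt_of_sing_prec hS hX hY hp)
  · exact Or.inr (aux_lt_of_sing_prec hS hY hX hp)

lemma aux_lt_trans {x y z : O} (hxy : S.lt x y) (hyz : S.lt y z) : S.lt x z := by
  obtain ⟨X, hX⟩ := aux_sing_exists (S := S) hS x
  obtain ⟨Y, hY⟩ := aux_sing_exists (S := S) hS y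
  obtain ⟨Z, hZ⟩ := aux_sing_exists (S := S) hS z
  exact aux_lt_of_sing_prec hS hX hZ
    (hS.prec_trans X Y Z (hxy X Y hX hY) (hyz Y Z hY hZ))

/-- Well-foundedness of `lt` on ordinals, via singleton classes. -/
lemma aux_ord_wf (φ : O → Prop) (h : ∃ x, φ x) :
    ∃ m, φ m ∧ ∀ y, φ y → ¬ S.lt y m := by
  obtain ⟨x0, hx0⟩ := h
  obtain ⟨X0, hX0⟩ := aux_sing_exists (S := S) hS x0
  obtain ⟨M, ⟨m, hm, hφm⟩, hmin⟩ :=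
    hS.wf (fun X => ∃ x, S.isSing x X ∧ φ x) ⟨X0, x0, hX0, hx0⟩
  refine ⟨m, hφm, ?_⟩
  intro y hy hlt
  obtain ⟨Y, hY⟩ := aux_sing_exists (S := S) hS y
  exact hmin Y ⟨y, hY, hy⟩ (hlt Y M hY hm)

/-- The class `{z : z < x}` has limit `x`. -/
lemma aux_ltClass_isLim {x : O} {A : C} (hA : ∀ z, S.mem z A ↔ S.lt z x) :
    S.isLim A x := by
  constructor
  · exact fun z hz => (hA z).mp hz
  · intro l' hl'
    by_cases h : x = l'
    · exact Or.inr h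
    · rcases aux_lt_total hS h with hx | hx
      · exact Or.inl hx
      · exact absurd (hl' l' ((hA l').mpr hx)) (aux_lt_irrefl hS l')

/-- The index of `{z : z < x}` is not smaller than `x`. -/
lemma aux_ltClass_index_not_lt {x : O} {A : C} {i : O}
    (hA : ∀ z, S.mem z A ↔ S.lt z x) (hi : S.iota A i) : ¬ S.lt i x := by
  intro hlt
  have hφ : ∃ y, ∃ B : C, ∃ j, (∀ z, S.mem z B ↔ S.lt z y) ∧ S.iota B j ∧ S.lt j y :=
    ⟨x, A, i, hA, hi, hlt⟩
  obtain ⟨m, ⟨B, j, hB, hj, hjm⟩, hmin⟩ := aux_ord_wf hS _ hφ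
  obtain ⟨B', hB'⟩ := hS.comp (fun z => S.lt z j)
  have hlim : S.isLim B' j := aux_ltClass_isLim hS hB'
  obtain ⟨j', hj'⟩ := hS.indexing B' ⟨j, hlim⟩
  have hprec : S.prec B' B :=
    hS.respective B' B j j hlim (Or.inr rfl) ((hB j).mpr hjm)
  have hj'j : S.lt j' j := (hS.iota_spec B j hj).1 B' j' hprec hj'
  exact hmin j ⟨B', j', hB', hj', hj'j⟩ hjm

/-- If `x0` is the index of no class, every index is `< x0`. -/
lemma aux_index_lt_of_nonindex {x0 : O} (h0 : ¬ ∃ X : C, S.iota X x0) :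
    ∀ (X : C) (j : O), S.iota X j → S.lt j x0 := by
  have key : ∀ (X : C) (j : O), S.iota X j → ¬ S.lt x0 j := by
    intro X j hj hlt
    obtain ⟨M, ⟨m, hm, hx0m⟩, hmin⟩ :=
      hS.wf (fun Y => ∃ k, S.iota Y k ∧ S.lt x0 k) ⟨X, j, hj, hlt⟩
    have hb : ∀ (Z : C) (k : O), S.prec Z M → S.iota Z k → S.lt k x0 := by
      intro Z k hZM hZk
      have hne : k ≠ x0 := fun e => h0 ⟨Z, e ▸ hZk⟩
      have hnlt : ¬ S.lt x0 k := fun hl => hmin Z ⟨k, hZk, hl⟩ hZM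
      rcases aux_lt_total hS hne with h | h
      · exact h
      · exact absurd h hnlt
    rcases (hS.iota_spec M m hm).2 x0 hb with h | h
    · exact aux_lt_irrefl hS x0 (aux_lt_trans hS hx0m h)
    · exact aux_lt_irrefl hS x0 (h ▸ hx0m)
  intro X j hj
  have hne : j ≠ x0 := fun e => h0 ⟨X, e ▸ hj⟩
  rcases aux_lt_total hS hne with h | h
  · exact h
  · exact absurd h (key X j hj)

end Aux

end COT

/-- Proposition III of COT: every ordinal is the index of some class. -/
theorem COT.every_ordinal_is_index {O C : Type*} (S : COT O C) (hS : S.Axioms) :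
    ∀ x : O, ∃ X : C, S.iota X x := by
  intro x
  by_contra h0
  obtain ⟨A, hA⟩ := hS.comp (fun z => S.lt z x)
  obtain ⟨i, hi⟩ := hS.indexing A ⟨x, aux_ltClass_isLim hS hA⟩
  exact aux_ltClass_index_not_lt hS hA hi (aux_index_lt_of_nonindex hS h0 A i hi)
end

section
/- Define y ∈* x iff ∃X: y ε X ∧ x = ι(X). Then Pairing holds for ∈*: for all ordinals a, b there exists an ordinal x such that y ∈* x iff y = a or y = b. -/
section Aux

variable {O C : Type*} (S : COT O C) (hS : S.Axioms)
include hS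

lemma COT.sing_exists (x : O) : ∃ X, S.isSing x X := hS.comp (· = x)

lemma COT.prec_irrefl (X : C) : ¬ S.prec X X := by
  obtain ⟨M, rfl, hmin⟩ := hS.wf (· = X) ⟨X, rfl⟩
  exact hmin M rfl

lemma COT.prec_of_not_equiv {X Y : C} (h : ¬ S.equiv X Y) :
    S.prec X Y ∨ S.prec Y X := (hS.coConnected X Y).mp h

lemma COT.not_equiv_of_prec {X Y : C} (h : S.prec X Y) : ¬ S.equiv X Y :=
  fun he => ((hS.coConnected X Y).mpr (Or.inl h)) he

omit hS in
lemma COT.equiv_of_sings {x : O} {X Y : C} (hX : S.isSing x X) (hY : S.isSing x Y) :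
    S.equiv X Y := fun z => (hX z).trans (hY z).symm

lemma COT.prec_congr_left {X X' Y : C} (he : S.equiv X X') (h : S.prec X Y) :
    S.prec X' Y := by
  by_contra h'
  rcases S.prec_of_not_equiv hS (fun hc => S.not_equiv_of_prec hS h
      (fun z => (he z).trans (hc z))) with h2 | h2
  · exact h' h2
  · exact S.not_equiv_of_prec hS (hS.prec_trans X Y X' h h2) he

lemma COT.prec_congr_right {X Y Y' : C} (he : S.equiv Y Y') (h : S.prec X Y) :
    S.prec X Y' := by
  by_contra h'
  rcases S.prec_of_not_equiv hS (fun hc => S.not_equiv_of_prec hS h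
      (fun z => (hc z).trans (he z).symm)) with h2 | h2
  · exact h' h2
  · exact S.prec_irrefl hS Y
      (hS.prec_trans Y X Y (S.prec_congr_left hS (fun z => (he z).symm) h2) h)

lemma COT.lt_iff_prec {x y : O} {X Y : C} (hX : S.isSing x X) (hY : S.isSing y Y) :
    S.lt x y ↔ S.prec X Y := by
  constructor
  · exact fun h => h X Y hX hY
  · intro h X' Y' hX' hY'
    exact S.prec_congr_right hS (S.equiv_of_sings hY hY')
      (S.prec_congr_left hS (S.equiv_of_sings hX hX') h)

lemma COT.lt_irrefl (x : O) : ¬ S.lt x x := by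
  obtain ⟨X, hX⟩ := S.sing_exists hS x
  exact fun h => S.prec_irrefl hS X ((S.lt_iff_prec hS hX hX).mp h)

lemma COT.lt_trans {x y z : O} (h1 : S.lt x y) (h2 : S.lt y z) : S.lt x z := by
  obtain ⟨X, hX⟩ := S.sing_exists hS x
  obtain ⟨Y, hY⟩ := S.sing_exists hS y
  obtain ⟨Z, hZ⟩ := S.sing_exists hS z
  exact (S.lt_iff_prec hS hX hZ).mpr (hS.prec_trans X Y Z
    ((S.lt_iff_prec hS hX hY).mp h1) ((S.lt_iff_prec hS hY hZ).mp h2))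

lemma COT.lt_trichotomy (x y : O) : S.lt x y ∨ x = y ∨ S.lt y x := by
  obtain ⟨X, hX⟩ := S.sing_exists hS x
  obtain ⟨Y, hY⟩ := S.sing_exists hS y
  by_cases he : S.equiv X Y
  · exact Or.inr (Or.inl (((hY x).mp ((he x).mp ((hX x).mpr rfl)))))
  · rcases S.prec_of_not_equiv hS he with h | h
    · exact Or.inl ((S.lt_iff_prec hS hX hY).mpr h)
    · exact Or.inr (Or.inr ((S.lt_iff_prec hS hY hX).mpr h))

/-- Any class with a strict upper bound is bounded. -/
lemma COT.bnd_of_ub {X : C} {u : O} (hu : ∀ x, S.mem x X → S.lt x u) : S.bnd X := by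
  obtain ⟨M, ⟨m, hmM, hm⟩, hmin⟩ :=
    hS.wf (fun Z => ∃ v, S.isSing v Z ∧ ∀ x, S.mem x X → S.lt x v)
      ⟨_, u, (S.sing_exists hS u).choose_spec, hu⟩
  refine ⟨m, hm, fun l' hl' => ?_⟩
  rcases S.lt_trichotomy hS m l' with h | h | h
  · exact Or.inl h
  · exact Or.inr h
  · obtain ⟨L, hL⟩ := S.sing_exists hS l'
    exact absurd ((S.lt_iff_prec hS hL hmM).mp h)
      (hmin L ⟨l', hL, hl'⟩)

/-- Indices determine classes up to coextensionality. -/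
lemma COT.equiv_of_iota {X Y : C} {i : O} (hX : S.iota X i) (hY : S.iota Y i) :
    S.equiv X Y := by
  by_contra he
  rcases S.prec_of_not_equiv hS he with h | h
  · exact S.lt_irrefl hS i ((hS.iota_spec Y i hY).1 X i h hX)
  · exact S.lt_irrefl hS i ((hS.iota_spec X i hX).1 Y i h hY)

end Aux

/-- Pairing for the interpreted membership `∈*` in COT. -/
theorem COT.memStar_pairing {O C : Type*} (S : COT O C) (hS : S.Axioms) :
    ∀ a b : O, ∃ x : O, ∀ y, S.memStar y x ↔ (y = a ∨ y = b) := by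
  intro a b
  obtain ⟨l, ⟨k, hkl⟩, hcl⟩ := hS.infinity
  obtain ⟨k', hkk', hk'l⟩ := hcl k hkl
  have hkne : k ≠ k' := fun h => S.lt_irrefl hS k (h ▸ hkk')
  obtain ⟨P, hP⟩ := hS.comp (fun y => y = a ∨ y = b)
  have hbndP : S.bnd P := by
    by_cases hab : a = b
    · obtain ⟨K, hK⟩ := S.sing_exists hS k
      have hbndK : S.bnd K := S.bnd_of_ub hS (u := l)
        (fun x hx => ((hK x).mp hx) ▸ hkl)
      refine hS.boundedness K P hbndK ⟨fun u v => u = k ∧ v = a, ?_, ?_, ?_⟩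
      · rintro u v ⟨h1, h2⟩
        exact ⟨(hK u).mpr h1, (hP v).mpr (Or.inl h2)⟩
      · intro u hu
        exact ⟨a, ⟨(hK u).mp hu, rfl⟩, fun v hv => hv.2⟩
      · intro v hv
        exact ⟨k, ⟨rfl, by rcases (hP v).mp hv with h | h <;> simp [h, hab]⟩,
          fun u hu => hu.1⟩
    · obtain ⟨K, hK⟩ := hS.comp (fun z => z = k ∨ z = k')
      have hbndK : S.bnd K := S.bnd_of_ub hS (u := l)
        (fun x hx => by rcases (hK x).mp hx with h | h <;> subst h <;> assumption)
      refine hS.boundedness K P hbndK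
        ⟨fun u v => (u = k ∧ v = a) ∨ (u = k' ∧ v = b), ?_, ?_, ?_⟩
      · rintro u v (⟨h1, h2⟩ | ⟨h1, h2⟩)
        · exact ⟨(hK u).mpr (Or.inl h1), (hP v).mpr (Or.inl h2)⟩
        · exact ⟨(hK u).mpr (Or.inr h1), (hP v).mpr (Or.inr h2)⟩
      · intro u hu
        rcases (hK u).mp hu with rfl | rfl
        · exact ⟨a, Or.inl ⟨rfl, rfl⟩, by
            rintro v (⟨_, rfl⟩ | ⟨h, rfl⟩) <;> first | rfl | exact absurd h hkne | exact absurd h hkne | exact absurd h.symm hkne⟩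
        · exact ⟨b, Or.inr ⟨rfl, rfl⟩, by
            rintro v (⟨h, rfl⟩ | ⟨_, rfl⟩) <;>
              first | rfl | exact absurd h hkne | exact absurd h.symm hkne⟩
      · intro v hv
        rcases (hP v).mp hv with rfl | rfl
        · exact ⟨k, Or.inl ⟨rfl, rfl⟩, by
            rintro u (⟨rfl, _⟩ | ⟨rfl, h⟩) <;> first | rfl | exact absurd h hab | exact absurd h.symm hab⟩
        · exact ⟨k', Or.inr ⟨rfl, rfl⟩, by
            rintro u (⟨rfl, h⟩ | ⟨rfl, _⟩) <;> first | rfl | exact absurd h hab | exact absurd h.symm hab⟩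
  obtain ⟨i, hi⟩ := hS.indexing P hbndP
  refine ⟨i, fun y => ⟨?_, fun h => ⟨P, (hP y).mpr h, hi⟩⟩⟩
  rintro ⟨X, hyX, hXi⟩
  exact (hP y).mp ((S.equiv_of_iota hS hXi hi y).mp hyX)
end
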